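/- arXiv:2007.13396 — 3 statements merged into one kernel-verified Lean document; each statement's English description precedes it below -/
import Mathlib

section
/- Let m be even, λ < 0 real, B = J_n(λ) ⊕ J_n(λ) and H = Q_n ⊕ (−Q_n). Then there exists an H-selfadjoint matrix A (i.e., HA = A*H) with A^m = B. -/
open Matrix

def jordanBlock (n : ℕ) (lam : ℂ) : Matrix (Fin n) (Fin n) ℂ :=
  fun i j => if (i : ℕ) = (j : ℕ) then lam else if (i : ℕ) + 1 = (j : ℕ) then 1 else 0

def backQ (n : ℕ) : Matrix (Fin n) (Fin n) ℂ :=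
  fun i j => if (i : ℕ) + (j : ℕ) + 1 = n then 1 else 0

def dsum {n : ℕ} (A B : Matrix (Fin n) (Fin n) ℂ) :
    Matrix (Fin (n + n)) (Fin (n + n)) ℂ :=
  Matrix.reindex finSumFinEquiv finSumFinEquiv (Matrix.fromBlocks A 0 0 B)

/-!
Write `J_n(λ) = λ + N` with `N` nilpotent. Since `-λ > 0`, Newton's method in the commutative
algebra `ℝ[N]` gives a real polynomial `q` with `q(-N)^m = -J_n(λ)`. As `Q_n N = Nᴴ Q_n`, every
real polynomial `R` in `N` satisfies `Q_n R = Rᴴ Q_n`. For `ζ = exp(iπ/m)` the block matrix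
`[[Re ζ • R, -Im ζ • R], [Im ζ • R, Re ζ • R]]` is then `(Q_n ⊕ -Q_n)`-selfadjoint, and its `m`-th
power is the same block form built from `ζ^m = -1` and `R^m = -J_n(λ)`, namely `J_n(λ) ⊕ J_n(λ)`.
-/

open Polynomial ComplexConjugate

theorem SemiconjBy.aeval {K A : Type*} [CommSemiring K] [Semiring A] [Algebra K A]
    {Q x y : A} (h : SemiconjBy Q x y) (p : K[X]) : SemiconjBy Q (aeval x p) (aeval y p) := by
  induction p using Polynomial.induction_on' with
  | add p q hp hq => simpa only [map_add] using hp.add_right hq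
  | monomial k c =>
    simp only [aeval_monomial]
    exact (Algebra.commute_algebraMap_right c Q).semiconjBy.mul_right (h.pow_right k)

theorem Polynomial.star_aeval {K A : Type*} [CommSemiring K] [StarRing K] [TrivialStar K]
    [Semiring A] [StarRing A] [Algebra K A] [StarModule K A] (x : A) (p : K[X]) :
    star (aeval x p) = aeval (star x) p := by
  induction p using Polynomial.induction_on' with
  | add p q hp hq => simp only [map_add, star_add, hp, hq]
  | monomial k c =>
    simp only [aeval_monomial, star_mul, star_pow, ← algebraMap_star_comm, star_trivial]
    exact (Algebra.commute_algebraMap_right c (star x ^ k)).eq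

open scoped IsMulCommutative in
theorem exists_aeval_pow_eq_algebraMap_add {K A : Type*} [Field K] [Ring A] [Algebra K A]
    {m : ℕ} (hm : (m : K) ≠ 0) {a : K} (ha : a ≠ 0) {x : A} (hx : IsNilpotent x) :
    ∃ q : K[X], aeval x q ^ m = algebraMap K A (a ^ m) + x := by
  let S := Algebra.adjoin K {x}
  let y : S := ⟨x, Algebra.self_mem_adjoin_singleton K x⟩
  let P : S[X] := X ^ m - C (algebraMap K S (a ^ m) + y)
  have hy : IsNilpotent y := by
    obtain ⟨k, hk⟩ := hx
    exact ⟨k, Subtype.ext hk⟩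
  have hP : IsNilpotent (aeval (algebraMap K S a) P) := by
    simpa [P, map_pow] using hy.neg
  have hP' : IsUnit (aeval (algebraMap K S a) (derivative P)) := by
    have : aeval (algebraMap K S a) (derivative P) = algebraMap K S (m * a ^ (m - 1)) := by
      simp only [P, derivative_sub, derivative_C, sub_zero, derivative_X_pow]
      simp
    rw [this]
    exact (IsUnit.mk0 _ (mul_ne_zero hm (pow_ne_zero (m - 1) ha))).map (algebraMap K S)
  obtain ⟨r, -, hr⟩ := (existsUnique_nilpotent_sub_and_aeval_eq_zero hP hP').exists
  obtain ⟨q, hq⟩ : (r : A) ∈ (aeval (R := K) x).range := by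
    rw [← Algebra.adjoin_singleton_eq_range_aeval]
    exact r.2
  refine ⟨q, ?_⟩
  have hrm := congrArg Subtype.val (sub_eq_zero.mp (by simpa [P] using hr))
  simpa [← hq] using hrm

theorem Matrix.IsUpperTriangular.isNilpotent {R n : Type*} [CommRing R] [Fintype n]
    [DecidableEq n] [LinearOrder n] {M : Matrix n n R} (h : M.IsUpperTriangular)
    (hdiag : ∀ i, M i i = 0) : IsNilpotent M :=
  ⟨Fintype.card n, by
    simpa [charpoly_of_isUpperTriangular M h, hdiag] using aeval_self_charpoly M⟩

section rotBlocks

variable {l : Type*}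

/-- `z ⊗ R`, with `z` acting on `ℝ² ≅ ℂ` as multiplication in the basis `1, i`. -/
noncomputable def rotBlocks (z : ℂ) (R : Matrix l l ℂ) : Matrix (l ⊕ l) (l ⊕ l) ℂ :=
  fromBlocks (z.re • R) (-(z.im • R)) (z.im • R) (z.re • R)

theorem rotBlocks_mul [Fintype l] (z w : ℂ) (R S : Matrix l l ℂ) :
    rotBlocks z R * rotBlocks w S = rotBlocks (z * w) (R * S) := by
  simp only [rotBlocks, fromBlocks_multiply, smul_mul_smul, Matrix.neg_mul, Matrix.mul_neg,
    Complex.mul_re, Complex.mul_im, sub_smul, add_smul]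
  congr 1 <;> abel

theorem rotBlocks_one [DecidableEq l] : rotBlocks (1 : ℂ) (1 : Matrix l l ℂ) = 1 := by
  simp [rotBlocks, fromBlocks_one]

theorem rotBlocks_pow [Fintype l] [DecidableEq l] (z : ℂ) (R : Matrix l l ℂ) (k : ℕ) :
    rotBlocks z R ^ k = rotBlocks (z ^ k) (R ^ k) := by
  induction k with
  | zero => simp [rotBlocks_one]
  | succ k ih => rw [pow_succ, ih, rotBlocks_mul, ← pow_succ, ← pow_succ]

theorem rotBlocks_neg_one (R : Matrix l l ℂ) :
    rotBlocks (-1) R = fromBlocks (-R) 0 0 (-R) := by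
  simp [rotBlocks]

theorem conjTranspose_rotBlocks (z : ℂ) (R : Matrix l l ℂ) :
    (rotBlocks z R)ᴴ = rotBlocks (conj z) Rᴴ := by
  simp [rotBlocks, fromBlocks_conjTranspose, conjTranspose_smul]

theorem fromBlocks_mul_rotBlocks_eq_conjTranspose_mul [Fintype l] {Q R : Matrix l l ℂ}
    (h : Q * R = Rᴴ * Q) (z : ℂ) :
    fromBlocks Q 0 0 (-Q) * rotBlocks z R = (rotBlocks z R)ᴴ * fromBlocks Q 0 0 (-Q) := by
  rw [conjTranspose_rotBlocks]
  simp [rotBlocks, fromBlocks_multiply, h]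

end rotBlocks

theorem jordanBlock_eq_scalar_add (n : ℕ) (μ : ℂ) :
    jordanBlock n μ = scalar (Fin n) μ + jordanBlock n 0 := by
  ext i j
  by_cases h : i = j
  · subst h
    simp [jordanBlock]
  · simp [jordanBlock, h, Fin.val_inj]

theorem isNilpotent_jordanBlock_zero (n : ℕ) : IsNilpotent (jordanBlock n 0) := by
  refine IsUpperTriangular.isNilpotent (fun i j hij => ?_) (fun i => by simp [jordanBlock])
  have hji : (j : ℕ) < i := hij
  simp only [jordanBlock]
  rw [if_neg (by omega), if_neg (by omega)]

theorem backQ_eq_toMatrix_revPerm (n : ℕ) :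
    backQ n = (Fin.revPerm : Equiv.Perm (Fin n)).toPEquiv.toMatrix := by
  ext i j
  simp only [backQ, PEquiv.toMatrix_apply, Equiv.toPEquiv_apply, Option.mem_def,
    Option.some.injEq, Fin.revPerm_apply, Fin.ext_iff, Fin.val_rev]
  congr 1
  apply propext
  omega

theorem backQ_mul_jordanBlock_zero (n : ℕ) :
    backQ n * jordanBlock n 0 = (jordanBlock n 0)ᴴ * backQ n := by
  ext i j
  simp only [backQ_eq_toMatrix_revPerm, PEquiv.toMatrix_toPEquiv_mul,
    PEquiv.mul_toMatrix_toPEquiv, submatrix_apply, conjTranspose_apply, jordanBlock,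
    Fin.revPerm_symm, Fin.revPerm_apply, id, Fin.val_rev]
  have := i.isLt
  have := j.isLt
  split_ifs <;> simp <;> omega

theorem dsum_eq_reindexAlgEquiv {n : ℕ} (A B : Matrix (Fin n) (Fin n) ℂ) :
    dsum A B = reindexAlgEquiv ℂ ℂ finSumFinEquiv (fromBlocks A 0 0 B) :=
  rfl

theorem exists_pow_eq_neg_jordanBlock_and_backQ_mul {m : ℕ} (hm : 0 < m) {lam : ℝ}
    (hlam : lam < 0) (n : ℕ) :
    ∃ R : Matrix (Fin n) (Fin n) ℂ, R ^ m = -jordanBlock n lam ∧ backQ n * R = Rᴴ * backQ n := by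
  let a : ℝ := (-lam) ^ (m⁻¹ : ℝ)
  have ha : a ^ m = -lam := Real.rpow_inv_natCast_pow (by linarith) hm.ne'
  have ha0 : a ≠ 0 := (Real.rpow_pos_of_pos (by linarith) _).ne'
  obtain ⟨q, hq⟩ := exists_aeval_pow_eq_algebraMap_add (A := Matrix (Fin n) (Fin n) ℂ)
    (Nat.cast_ne_zero.mpr hm.ne') ha0 (isNilpotent_jordanBlock_zero n).neg
  have hN : SemiconjBy (backQ n) (-jordanBlock n 0) (star (-jordanBlock n 0)) := by
    simpa [SemiconjBy, star_eq_conjTranspose] using backQ_mul_jordanBlock_zero n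
  refine ⟨aeval (-jordanBlock n 0) q, ?_, ?_⟩
  · rw [hq, ha, jordanBlock_eq_scalar_add n lam, map_neg, neg_add]
    rfl
  · rw [← star_eq_conjTranspose, star_aeval]
    exact (hN.aeval q).eq

theorem exists_H_selfadjoint_even_root_paired_blocks_general (n m : ℕ) (hm : 0 < m)
    (lam : ℝ) (hlam : lam < 0) :
    ∃ A : Matrix (Fin (n + n)) (Fin (n + n)) ℂ,
      dsum (backQ n) (-(backQ n)) * A = Aᴴ * dsum (backQ n) (-(backQ n)) ∧
      A ^ m = dsum (jordanBlock n (lam : ℂ)) (jordanBlock n (lam : ℂ)) := by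
  obtain ⟨R, hRm, hQR⟩ := exists_pow_eq_neg_jordanBlock_and_backQ_mul hm hlam n
  let ζ : ℂ := Complex.exp (Real.pi * Complex.I / m)
  have hζ : ζ ^ m = -1 := by
    rw [← Complex.exp_nat_mul, mul_div_cancel₀ _ (Nat.cast_ne_zero.mpr hm.ne'),
      Complex.exp_pi_mul_I]
  let e := reindexAlgEquiv ℂ ℂ (finSumFinEquiv (m := n) (n := n))
  have he : ∀ M, (e M)ᴴ = e Mᴴ := fun M => by simp [e, coe_reindexAlgEquiv]
  refine ⟨e (rotBlocks ζ R), ?_, ?_⟩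
  · rw [dsum_eq_reindexAlgEquiv, he, ← map_mul, ← map_mul,
      fromBlocks_mul_rotBlocks_eq_conjTranspose_mul hQR]
  · rw [← map_pow, rotBlocks_pow, hζ, hRm, rotBlocks_neg_one, neg_neg, dsum_eq_reindexAlgEquiv]

theorem exists_H_selfadjoint_even_root_paired_blocks (n m : ℕ) (hm : 0 < m)
    (hme : Even m) (lam : ℝ) (hlam : lam < 0) :
    ∃ A : Matrix (Fin (n + n)) (Fin (n + n)) ℂ,
      dsum (backQ n) (-(backQ n)) * A = Aᴴ * dsum (backQ n) (-(backQ n)) ∧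
      A ^ m = dsum (jordanBlock n (lam : ℂ)) (jordanBlock n (lam : ℂ)) :=
  exists_H_selfadjoint_even_root_paired_blocks_general n m hm lam hlam
end

section
/- Let λ be a nonreal complex number, B = J_n(λ) ⊕ J_n(conj λ), and H = Q_{2n}. Then for any positive integer m there exists an H-selfadjoint matrix A with A^m = B. -/
open Matrix

/-!
Write `J_n(λ) = λ (1 + λ⁻¹ N)` with `N = J_n(0)` nilpotent. By Hensel's lemma `1 + X` has an
`m`-th root in `K⟦X⟧`; truncating it below degree `n` and evaluating at `λ⁻¹ N` gives an
`m`-th root of `1 + λ⁻¹ N`, hence an `m`-th root `X` of `J_n(λ)`. Put `Y = Q_n Xᴴ Q_n`. Since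
`Q_{2n} = [[0, Q_n], [Q_n, 0]]` and `Q_n` is a hermitian involution, `X ⊕ Y` is
`Q_{2n}`-selfadjoint, and `Y ^ m = Q_n J_n(λ)ᴴ Q_n = J_n(conj λ)`.
-/

open scoped Polynomial PowerSeries

theorem PowerSeries.exists_pow_eq_one_add_X {K : Type*} [Field K] {m : ℕ} (hm : (m : K) ≠ 0) :
    ∃ s : K⟦X⟧, s ^ m = 1 + X := by
  have hm₀ : m ≠ 0 := by rintro rfl; exact hm Nat.cast_zero
  have hmunit : IsUnit (m : K⟦X⟧) := by
    simpa using (isUnit_iff_ne_zero.mpr hm).map (C (R := K))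
  obtain ⟨s, hs, -⟩ := HenselianRing.is_henselian (I := Ideal.span {X})
    (Polynomial.X ^ m - Polynomial.C (1 + X : K⟦X⟧)) (Polynomial.monic_X_pow_sub_C _ hm₀) 1
    (by simp)
    (by simpa [Polynomial.derivative_X_pow] using hmunit.map (Ideal.Quotient.mk (Ideal.span {X})))
  exact ⟨s, sub_eq_zero.mp (by simpa using hs)⟩

theorem Polynomial.exists_X_pow_dvd_pow_sub_one_add_X {K : Type*} [Field K] {m : ℕ}
    (hm : (m : K) ≠ 0) (n : ℕ) : ∃ p : K[X], X ^ n ∣ p ^ m - (1 + X) := by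
  obtain ⟨s, hs⟩ := PowerSeries.exists_pow_eq_one_add_X hm
  refine ⟨s.trunc n, X_pow_dvd_iff.mpr fun d hd => ?_⟩
  have hdvd : (PowerSeries.X : K⟦X⟧) ^ n ∣ (s.trunc n : K⟦X⟧) ^ m - s ^ m := by
    refine (dvd_sub_comm.mp ?_).trans (sub_dvd_pow_sub_pow _ _ m)
    exact ⟨_, sub_eq_of_eq_add (PowerSeries.eq_X_pow_mul_shift_add_trunc n s)⟩
  rw [← coeff_coe]
  simpa [hs] using PowerSeries.X_pow_dvd_iff.mp hdvd d hd

theorem exists_pow_eq_one_add_of_pow_eq_zero {K A : Type*} [Field K] [Ring A] [Algebra K A]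
    {m n : ℕ} (hm : (m : K) ≠ 0) {N : A} (hN : N ^ n = 0) : ∃ S : A, S ^ m = 1 + N := by
  obtain ⟨p, q, hpq⟩ := Polynomial.exists_X_pow_dvd_pow_sub_one_add_X hm n
  refine ⟨Polynomial.aeval N p, sub_eq_zero.mp ?_⟩
  simpa [hN] using congrArg (Polynomial.aeval N) hpq

theorem conj_pow_of_mul_self_eq_one {M : Type*} [Monoid M] {h : M} (hh : h * h = 1) (x : M)
    (k : ℕ) : (h * x * h) ^ k = h * x ^ k * h := by
  have hsemi : SemiconjBy h (h * x * h) x := by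
    rw [SemiconjBy, ← mul_assoc, ← mul_assoc, hh, one_mul]
  rw [← one_mul ((h * x * h) ^ k), ← hh, mul_assoc, (hsemi.pow_right k).eq, mul_assoc]

namespace Matrix

variable {ι κ R : Type*} [Fintype ι] [Fintype κ] [CommRing R] [StarRing R]

def IsSelfAdjointWrt (H A : Matrix ι ι R) : Prop := H * A = Aᴴ * H

theorem IsSelfAdjointWrt.reindex {H A : Matrix ι ι R} (h : IsSelfAdjointWrt H A) (e : ι ≃ κ) :
    IsSelfAdjointWrt (reindex e e H) (reindex e e A) := by
  unfold IsSelfAdjointWrt at h ⊢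
  simp only [reindex_apply, conjTranspose_submatrix, submatrix_mul_equiv, h]

theorem isSelfAdjointWrt_fromBlocks [DecidableEq ι] {H : Matrix ι ι R} (hH : Hᴴ = H)
    (hHH : H * H = 1) (X : Matrix ι ι R) :
    IsSelfAdjointWrt (fromBlocks 0 H H 0) (fromBlocks X 0 0 (H * Xᴴ * H)) := by
  have hX : (H * Xᴴ * H)ᴴ * H = H * X := by
    simp only [conjTranspose_mul, conjTranspose_conjTranspose, hH, mul_assoc, hHH, mul_one]
  have hXH : H * (H * Xᴴ * H) = Xᴴ * H := by
    rw [← mul_assoc, ← mul_assoc, hHH, one_mul]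
  rw [IsSelfAdjointWrt, fromBlocks_conjTranspose, fromBlocks_multiply, fromBlocks_multiply, hX, hXH]
  simp

end Matrix

lemma jordanBlock_eq_smul_one_add (n : ℕ) (lam : ℂ) :
    jordanBlock n lam = lam • 1 + jordanBlock n 0 := by
  ext i j
  by_cases h : i = j
  · subst h; simp [jordanBlock]
  · simp [jordanBlock, h, Fin.val_inj]

lemma jordanBlock_zero_pow_apply (n k : ℕ) (i j : Fin n) :
    (jordanBlock n 0 ^ k) i j = if (i : ℕ) + k = j then 1 else 0 := by
  induction k generalizing j with
  | zero => simp [one_apply, Fin.val_inj]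
  | succ k ih =>
    rw [pow_succ, mul_apply]
    by_cases hk : (i : ℕ) + k < n
    · have hl (l : Fin n) : (i : ℕ) + k = l ↔ ⟨(i : ℕ) + k, hk⟩ = l := by
        rw [Fin.ext_iff]
      simp only [ih, hl, ite_mul, one_mul, zero_mul, Finset.sum_ite_eq, Finset.mem_univ, if_true,
        jordanBlock]
      simp only [Fin.ext_iff]
      split_ifs <;> first | rfl | omega
    · rw [Finset.sum_eq_zero fun l _ => by rw [ih, if_neg (by omega), zero_mul], if_neg (by omega)]

lemma jordanBlock_zero_pow_self (n : ℕ) : jordanBlock n 0 ^ n = 0 := by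
  ext i j
  rw [jordanBlock_zero_pow_apply, if_neg (by omega), Matrix.zero_apply]

lemma exists_pow_eq_jordanBlock (n : ℕ) {m : ℕ} (hm : m ≠ 0) {lam : ℂ} (hlam : lam ≠ 0) :
    ∃ X : Matrix (Fin n) (Fin n) ℂ, X ^ m = jordanBlock n lam := by
  obtain ⟨μ, hμ⟩ := IsAlgClosed.exists_pow_nat_eq lam (Nat.pos_of_ne_zero hm)
  obtain ⟨S, hS⟩ := exists_pow_eq_one_add_of_pow_eq_zero (K := ℂ) (Nat.cast_ne_zero.mpr hm)
    (N := lam⁻¹ • jordanBlock n 0) (by rw [smul_pow, jordanBlock_zero_pow_self, smul_zero])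
  refine ⟨μ • S, ?_⟩
  rw [smul_pow, hS, hμ, smul_add, smul_smul, mul_inv_cancel₀ hlam, one_smul,
    jordanBlock_eq_smul_one_add n lam]

lemma backQ_eq_submatrix_one (k : ℕ) :
    backQ k = (1 : Matrix (Fin k) (Fin k) ℂ).submatrix Fin.revPerm id := by
  ext i j
  have := i.isLt
  simp only [backQ, submatrix_apply, one_apply, id, Fin.ext_iff, Fin.revPerm_apply, Fin.val_rev]
  split_ifs <;> first | rfl | omega

lemma backQ_mul {ι : Type*} {k : ℕ} (M : Matrix (Fin k) ι ℂ) :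
    backQ k * M = M.submatrix Fin.rev id := by
  rw [backQ_eq_submatrix_one]
  exact one_submatrix_mul Fin.revPerm (Equiv.refl _) M

lemma mul_backQ {ι : Type*} {k : ℕ} (M : Matrix ι (Fin k) ℂ) :
    M * backQ k = M.submatrix id Fin.rev := by
  rw [backQ_eq_submatrix_one]
  exact mul_submatrix_one Fin.revPerm id M

lemma backQ_mul_backQ (k : ℕ) : backQ k * backQ k = 1 := by
  rw [backQ_mul, backQ_eq_submatrix_one, submatrix_submatrix]
  ext i j
  simp [one_apply]

lemma conjTranspose_backQ (k : ℕ) : (backQ k)ᴴ = backQ k := by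
  ext i j
  simp only [backQ, conjTranspose_apply]
  rw [add_comm (j : ℕ)]
  split_ifs <;> simp

lemma backQ_mul_conjTranspose_jordanBlock_mul_backQ (n : ℕ) (lam : ℂ) :
    backQ n * (jordanBlock n lam)ᴴ * backQ n = jordanBlock n (starRingEnd ℂ lam) := by
  ext i j
  have := i.isLt
  have := j.isLt
  simp only [backQ_mul, mul_backQ, submatrix_apply, conjTranspose_apply, id, jordanBlock,
    Fin.val_rev]
  split_ifs <;> first | (exfalso; omega) | simp

lemma backQ_add_self (n : ℕ) :
    backQ (n + n) = reindex finSumFinEquiv finSumFinEquiv (fromBlocks 0 (backQ n) (backQ n) 0) := by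
  ext i j
  refine Fin.addCases (fun a => ?_) (fun a => ?_) i <;>
    refine Fin.addCases (fun b => ?_) (fun b => ?_) j <;>
    simp only [reindex_apply, submatrix_apply, finSumFinEquiv_symm_apply_castAdd,
      finSumFinEquiv_symm_apply_natAdd, fromBlocks_apply₁₁, fromBlocks_apply₁₂,
      fromBlocks_apply₂₁, fromBlocks_apply₂₂, backQ, Fin.val_castAdd, Fin.val_natAdd,
      Matrix.zero_apply] <;>
    have := a.isLt <;> have := b.isLt <;> split_ifs <;> first | rfl | omega

lemma dsum_pow {n : ℕ} (A B : Matrix (Fin n) (Fin n) ℂ) (k : ℕ) :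
    dsum A B ^ k = dsum (A ^ k) (B ^ k) := by
  simp only [dsum, ← coe_reindexAlgEquiv ℂ ℂ, ← map_pow, fromBlocks_diagonal_pow]

theorem exists_H_selfadjoint_root_nonreal_blocks (n m : ℕ) (hm : 0 < m)
    (lam : ℂ) (hlam : lam.im ≠ 0) :
    ∃ A : Matrix (Fin (n + n)) (Fin (n + n)) ℂ,
      backQ (n + n) * A = Aᴴ * backQ (n + n) ∧
      A ^ m = dsum (jordanBlock n lam) (jordanBlock n (starRingEnd ℂ lam)) := by
  have hlam₀ : lam ≠ 0 := fun h => hlam (by simp [h])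
  obtain ⟨X, hX⟩ := exists_pow_eq_jordanBlock n hm.ne' hlam₀
  refine ⟨dsum X (backQ n * Xᴴ * backQ n), ?_, ?_⟩
  · rw [backQ_add_self]
    exact (isSelfAdjointWrt_fromBlocks (conjTranspose_backQ n) (backQ_mul_backQ n) X).reindex _
  · rw [dsum_pow, conj_pow_of_mul_self_eq_one (backQ_mul_backQ n), ← conjTranspose_pow, hX,
      backQ_mul_conjTranspose_jordanBlock_mul_backQ]
end

section
/- Let λ be a positive real number, μ the positive real m-th root of λ, and Ã = J_n(μ). Let P be the matrix whose j-th column is (Ã^m − λI)^{n−j} y for a vector y. Then P* Q_n P is an anti-lower-triangular Hankel matrix: its (i,j) entry vanishes whenever i + j ≤ n, and its (i,j) entry depends only on i + j. -/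
open Matrix

lemma jordan_pow_lower (n : ℕ) (c : ℂ) (k : ℕ) :
    ∀ i j : Fin n, (j : ℕ) ≤ (i : ℕ) →
      ((jordanBlock n c) ^ k) i j = if (i : ℕ) = (j : ℕ) then c ^ k else 0 := by
  induction k with
  | zero =>
      intro i j hji
      simp [Matrix.one_apply, Fin.ext_iff]
  | succ k ih =>
      intro i j hji
      rw [pow_succ, Matrix.mul_apply]
      have hterm : ∀ l : Fin n, ((jordanBlock n c) ^ k) i l * jordanBlock n c l j
          = if l = j then ((jordanBlock n c) ^ k) i j * c else 0 := by
        intro l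
        by_cases hlj : l = j
        · subst hlj; simp [jordanBlock]
        · have hvlj : (l : ℕ) ≠ (j : ℕ) := fun h => hlj (Fin.ext h)
          rw [if_neg hlj]
          by_cases h2 : (l : ℕ) + 1 = (j : ℕ)
          · have hle : (l : ℕ) ≤ (i : ℕ) := by omega
            rw [ih i l hle, if_neg (by omega : ¬ (i:ℕ) = (l:ℕ))]; ring
          · simp [jordanBlock, hvlj, h2]
      rw [Finset.sum_congr rfl fun l _ => hterm l, Finset.sum_ite_eq' Finset.univ j]
      rw [if_pos (Finset.mem_univ j), ih i j hji]
      split_ifs with h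
      · rw [pow_succ]
      · exact zero_mul c

lemma pow_strict_upper (n : ℕ) (A : Matrix (Fin n) (Fin n) ℂ)
    (hA : ∀ i j : Fin n, (j : ℕ) ≤ (i : ℕ) → A i j = 0) :
    ∀ k, ∀ i j : Fin n, (j : ℕ) < (i : ℕ) + k → (A ^ k) i j = 0 := by
  intro k
  induction k with
  | zero =>
      intro i j h
      rw [pow_zero]
      exact Matrix.one_apply_ne (by intro he; subst he; omega)
  | succ k ih =>
      intro i j h
      rw [pow_succ', Matrix.mul_apply]
      apply Finset.sum_eq_zero
      intro l _
      by_cases hl : (l : ℕ) ≤ (i : ℕ)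
      · rw [hA i l hl, zero_mul]
      · rw [ih l j (by omega), mul_zero]

lemma backQ_mul_apply (n : ℕ) (A : Matrix (Fin n) (Fin n) ℂ) (i j : Fin n) :
    (backQ n * A) i j = A i.rev j := by
  rw [Matrix.mul_apply]
  have hterm : ∀ l : Fin n, backQ n i l * A l j = if l = i.rev then A l j else 0 := by
    intro l
    have hrev : ((i.rev : Fin n) : ℕ) = n - ((i : ℕ) + 1) := Fin.val_rev i
    have hi := i.isLt; have hl := l.isLt
    by_cases h : (i : ℕ) + (l : ℕ) + 1 = n
    · rw [show backQ n i l = 1 from if_pos h, one_mul,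
        if_pos (Fin.ext (by omega : (l : ℕ) = (i.rev : ℕ)))]
    · rw [show backQ n i l = 0 from if_neg h, zero_mul,
        if_neg (fun he => h (by rw [he] at *; omega))]
  rw [Finset.sum_congr rfl fun l _ => hterm l, Finset.sum_ite_eq' Finset.univ i.rev]
  exact if_pos (Finset.mem_univ _)

lemma mul_backQ_apply (n : ℕ) (A : Matrix (Fin n) (Fin n) ℂ) (i j : Fin n) :
    (A * backQ n) i j = A i j.rev := by
  rw [Matrix.mul_apply]
  have hterm : ∀ l : Fin n, A i l * backQ n l j = if l = j.rev then A i l else 0 := by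
    intro l
    have hrev : ((j.rev : Fin n) : ℕ) = n - ((j : ℕ) + 1) := Fin.val_rev j
    have hj := j.isLt; have hl := l.isLt
    by_cases h : (l : ℕ) + (j : ℕ) + 1 = n
    · rw [show backQ n l j = 1 from if_pos h, mul_one,
        if_pos (Fin.ext (by omega : (l : ℕ) = (j.rev : ℕ)))]
    · rw [show backQ n l j = 0 from if_neg h, mul_zero,
        if_neg (fun he => h (by rw [he] at *; omega))]
  rw [Finset.sum_congr rfl fun l _ => hterm l, Finset.sum_ite_eq' Finset.univ j.rev]
  exact if_pos (Finset.mem_univ _)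

lemma backQ_jordan (n : ℕ) (c : ℂ) :
    backQ n * jordanBlock n c = (jordanBlock n c)ᵀ * backQ n := by
  ext i j
  rw [backQ_mul_apply, mul_backQ_apply, Matrix.transpose_apply]
  have hi := i.isLt; have hj := j.isLt
  have hri : ((i.rev : Fin n) : ℕ) = n - ((i : ℕ) + 1) := Fin.val_rev i
  have hrj : ((j.rev : Fin n) : ℕ) = n - ((j : ℕ) + 1) := Fin.val_rev j
  simp only [jordanBlock, hri, hrj]
  split_ifs <;> first | rfl | omega

lemma backQ_comm_pow (n : ℕ) (A : Matrix (Fin n) (Fin n) ℂ)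
    (h : backQ n * A = Aᵀ * backQ n) (k : ℕ) :
    backQ n * A ^ k = (A ^ k)ᵀ * backQ n := by
  induction k with
  | zero => simp
  | succ k ih =>
      calc backQ n * A ^ (k + 1) = (backQ n * A ^ k) * A := by rw [pow_succ, mul_assoc]
        _ = (A ^ k)ᵀ * (backQ n * A) := by rw [ih, mul_assoc]
        _ = ((A ^ k)ᵀ * Aᵀ) * backQ n := by rw [h, mul_assoc]
        _ = (A ^ (k + 1))ᵀ * backQ n := by rw [← Matrix.transpose_mul, ← pow_succ']

theorem gram_matrix_anti_lower_triangular_hankel (n m : ℕ) (hm : 0 < m)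
    (lam mu : ℝ) (hmu : 0 < mu) (hlam : lam = mu ^ m)
    (y : Fin n → ℂ) (P : Matrix (Fin n) (Fin n) ℂ)
    (hP : ∀ i j : Fin n, P i j =
      (((jordanBlock n (mu : ℂ)) ^ m - (lam : ℂ) • 1) ^ (n - 1 - (j : ℕ))).mulVec y i) :
    (∀ i j : Fin n, (i : ℕ) + (j : ℕ) + 2 ≤ n → (Pᴴ * backQ n * P) i j = 0) ∧
    (∀ i j i' j' : Fin n, (i : ℕ) + (j : ℕ) = (i' : ℕ) + (j' : ℕ) →
      (Pᴴ * backQ n * P) i j = (Pᴴ * backQ n * P) i' j') := by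
  set J : Matrix (Fin n) (Fin n) ℂ := jordanBlock n (mu : ℂ) with hJ
  set N : Matrix (Fin n) (Fin n) ℂ := J ^ m - (lam : ℂ) • 1 with hN
  have hlamC : (lam : ℂ) = ((mu : ℂ)) ^ m := by rw [hlam]; push_cast; ring
  -- N is strictly upper triangular
  have hNstrict : ∀ i j : Fin n, (j : ℕ) ≤ (i : ℕ) → N i j = 0 := by
    intro i j hji
    rw [hN, Matrix.sub_apply, jordan_pow_lower n (mu : ℂ) m i j hji,
      Matrix.smul_apply, Matrix.one_apply]
    by_cases h : i = j
    · rw [if_pos (by rw [h] : (i:ℕ) = (j:ℕ)), if_pos h, hlamC]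
      simp
    · rw [if_neg (fun he => h (Fin.ext he)), if_neg h]
      simp
  -- N^n = 0 and beyond
  have hNpow : ∀ s : ℕ, n ≤ s → N ^ s = 0 := by
    intro s hs
    have hn : N ^ n = 0 := by
      ext i j
      rw [Matrix.zero_apply]
      exact pow_strict_upper n N hNstrict n i j (by omega)
    rw [show s = n + (s - n) by omega, pow_add, hn, zero_mul]
  -- Q N^k = (N^k)ᵀ Q
  have hQN : ∀ k : ℕ, backQ n * N ^ k = (N ^ k)ᵀ * backQ n := by
    apply backQ_comm_pow
    have hQJm : backQ n * J ^ m = (J ^ m)ᵀ * backQ n :=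
      backQ_comm_pow n J (backQ_jordan n (mu : ℂ)) m
    have h2 : backQ n * ((lam : ℂ) • 1) = ((lam : ℂ) • 1)ᵀ * backQ n := by
      rw [Matrix.transpose_smul, Matrix.transpose_one, Matrix.mul_smul,
        Matrix.smul_mul, mul_one, one_mul]
    rw [hN, Matrix.mul_sub, Matrix.transpose_sub, Matrix.sub_mul, hQJm, h2]
  -- real entries: (N^k)ᴴ = (N^k)ᵀ
  have hJH : Jᴴ = Jᵀ := by
    ext i j
    rw [Matrix.conjTranspose_apply, Matrix.transpose_apply, hJ]
    simp only [jordanBlock]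
    split_ifs <;> simp
  have hNH : ∀ k : ℕ, (N ^ k)ᴴ = (N ^ k)ᵀ := by
    intro k
    rw [Matrix.conjTranspose_pow, Matrix.transpose_pow]
    congr 1
    rw [hN, Matrix.conjTranspose_sub, Matrix.conjTranspose_pow, hJH,
      Matrix.transpose_sub, Matrix.transpose_pow]
    congr 1
    rw [Matrix.conjTranspose_smul, Matrix.conjTranspose_one, Matrix.transpose_smul,
      Matrix.transpose_one]
    congr 1
    simp
  -- the key entrywise formula
  have key : ∀ i j : Fin n, (Pᴴ * backQ n * P) i j
      = star y ⬝ᵥ (backQ n * N ^ ((n - 1 - (i : ℕ)) + (n - 1 - (j : ℕ)))).mulVec y := by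
    intro i j
    set a := n - 1 - (i : ℕ) with ha
    set b := n - 1 - (j : ℕ) with hb
    have hrow : ∀ l : Fin n, (Pᴴ * backQ n) i l
        = (star ((N ^ a).mulVec y) ᵥ* backQ n) l := by
      intro l
      rw [Matrix.mul_apply, Matrix.vecMul, dotProduct]
      refine Finset.sum_congr rfl fun k _ => ?_
      rw [Matrix.conjTranspose_apply, hP k i]
      rfl
    have e1 : (Pᴴ * backQ n * P) i j
        = (star ((N ^ a).mulVec y) ᵥ* backQ n) ⬝ᵥ ((N ^ b).mulVec y) := by
      rw [Matrix.mul_apply, dotProduct]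
      exact Finset.sum_congr rfl fun l _ => by rw [hrow l, hP l j]
    rw [e1, ← Matrix.dotProduct_mulVec, Matrix.star_mulVec, hNH a,
      ← Matrix.dotProduct_mulVec, Matrix.mulVec_mulVec, Matrix.mulVec_mulVec]
    rw [← hQN a, mul_assoc, ← pow_add]
  constructor
  · intro i j hij
    have hi := i.isLt; have hj := j.isLt
    rw [key i j, hNpow ((n - 1 - (i : ℕ)) + (n - 1 - (j : ℕ))) (by omega)]
    simp
  · intro i j i' j' hsum
    have hi := i.isLt; have hj := j.isLt; have hi' := i'.isLt; have hj' := j'.isLt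
    rw [key i j, key i' j']
    have : (n - 1 - (i : ℕ)) + (n - 1 - (j : ℕ))
        = (n - 1 - (i' : ℕ)) + (n - 1 - (j' : ℕ)) := by omega
    rw [this]
end
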